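/- arXiv:1210.2528 — 5 statements merged into one kernel-verified Lean document; each statement's English description precedes it below -/
import Mathlib

section
/- Let A be a finite dimensional associative algebra over a field F of characteristic 0, and let 𝔤 be a Lie algebra acting on A by derivations. If the only 𝔤-invariant two-sided ideals of A are 0 and A itself, then either A is semisimple or A·A = 0. -/
/-!
The span `A·A` of all products is a `𝔤`-invariant ideal, so either `A·A = 0` or `A·A = A`.
In the latter case let `I` be a nonzero square-zero ideal. The radical of the trace form
`(x, y) ↦ tr(L_{xy})` is a `𝔤`-invariant ideal, because `L_{δy} = [δ, L_y]` is traceless for a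
derivation `δ`, and it contains `I`, because `L_{xa}` squares to zero for `x ∈ I`. Hence the
trace form vanishes, and as `A = A·A`, so does `x ↦ tr(L_x)`. Every `L_x` then has traceless
positive powers, hence is nilpotent in characteristic zero, and by Engel's theorem
`A = A·A = A·A·A = ⋯` is zero.
-/

attribute [local instance] LieRing.ofAssociativeRing

open LinearMap Polynomial

lemma trace_aeval_eq_zero_of_X_dvd {R M : Type*} [CommRing R] [AddCommGroup M] [Module R M]
    {f : Module.End R M} (hf : ∀ k : ℕ, trace R M (f ^ (k + 1)) = 0) {p : R[X]} (hp : X ∣ p) :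
    trace R M (aeval f p) = 0 := by
  obtain ⟨q, rfl⟩ := hp
  rw [map_mul, aeval_X, aeval_eq_sum_range, Finset.mul_sum, map_sum]
  refine Finset.sum_eq_zero fun i _ => ?_
  rw [mul_smul_comm, map_smul, ← pow_succ', hf i, smul_zero]

theorem isNilpotent_of_trace_pow_eq_zero {K V : Type*} [Field K] [CharZero K] [AddCommGroup V]
    [Module K V] [FiniteDimensional K V] {f : Module.End K V}
    (hf : ∀ k : ℕ, trace K V (f ^ (k + 1)) = 0) : IsNilpotent f := by
  obtain ⟨q, hχ, hq⟩ :=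
    exists_eq_pow_rootMultiplicity_mul_and_not_dvd f.charpoly f.charpoly_monic.ne_zero 0
  set r := f.charpoly.rootMultiplicity 0
  rw [C_0, sub_zero] at hχ hq
  obtain ⟨a, b, hab⟩ := ((irreducible_X.coprime_iff_not_dvd).2 hq).pow_left (m := r + 1)
  have hχf : aeval f (X ^ r * q) = 0 := hχ ▸ f.aeval_self_charpoly
  -- `aeval f (a * X ^ (r + 1))` is the projection onto the Fitting component on which `f` is
  -- invertible; being a traceless idempotent in characteristic zero, it vanishes.
  have hidem : IsIdempotentElem (aeval f (a * X ^ (r + 1))) := by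
    have : (a * X ^ (r + 1)) * (a * X ^ (r + 1)) = a * X ^ (r + 1) - a * b * X * (X ^ r * q) := by
      linear_combination (a * X ^ (r + 1)) * hab
    rw [IsIdempotentElem, ← map_mul, this, map_sub, map_mul _ (a * b * X), hχf, mul_zero,
      sub_zero]
  have he : aeval f (a * X ^ (r + 1)) = 0 :=
    hidem.eq_zero_of_trace_eq_zero (trace_aeval_eq_zero_of_X_dvd hf (dvd_mul_of_dvd_right
      (dvd_pow_self X r.succ_ne_zero) a))
  refine ⟨r, ?_⟩
  calc f ^ r = aeval f (X ^ r * (a * X ^ (r + 1) + b * q)) := by simp [hab]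
    _ = 0 := by
      rw [mul_add, map_add, map_mul, he, mul_zero, zero_add, mul_left_comm, map_mul, hχf,
        mul_zero]

section NonUnitalAlgebra

variable {F A : Type*} [Field F] [NonUnitalRing A] [Module F A]

variable (F A) in
def productSpan : Submodule F A := Submodule.span F {z : A | ∃ u v : A, u * v = z}

lemma mul_mem_productSpan (u v : A) : u * v ∈ productSpan F A :=
  Submodule.subset_span ⟨u, v, rfl⟩

lemma map_mem_productSpan {δ : Module.End F A} (hδ : ∀ a b : A, δ (a * b) = δ a * b + a * δ b)
    {x : A} (hx : x ∈ productSpan F A) : δ x ∈ productSpan F A := by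
  refine (Submodule.span_le (p := (productSpan F A).comap δ)).2 ?_ hx
  rintro _ ⟨u, v, rfl⟩
  rw [SetLike.mem_coe, Submodule.mem_comap, hδ]
  exact add_mem (mul_mem_productSpan _ _) (mul_mem_productSpan _ _)

variable [IsScalarTower F A A] [SMulCommClass F A A]

variable (F A) in
noncomputable def traceMul : A →ₗ[F] F := trace F A ∘ₗ mul F A

variable (F A) in
noncomputable def traceRadical : Submodule F A := ker ((mul F A).compr₂ (traceMul F A))

lemma mul_apply_mul (x y : A) : mul F A (x * y) = mul F A x * mul F A y :=
  map_mul (NonUnitalAlgHom.lmul F A) x y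

lemma traceMul_apply (x : A) : traceMul F A x = trace F A (mul F A x) := rfl

lemma traceMul_mul_comm (x y : A) : traceMul F A (x * y) = traceMul F A (y * x) := by
  simp only [traceMul_apply, mul_apply_mul, trace_mul_comm]

lemma traceMul_map_eq_zero {δ : Module.End F A} (hδ : ∀ a b : A, δ (a * b) = δ a * b + a * δ b)
    (y : A) : traceMul F A (δ y) = 0 := by
  have h : mul F A (δ y) = δ * mul F A y - mul F A y * δ := by
    ext c
    simp [hδ]
  rw [traceMul_apply, h, map_sub, trace_mul_comm, sub_self]

lemma traceMul_eq_zero_of_mul_self_eq_zero {x : A} (hx : x * x = 0) : traceMul F A x = 0 :=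
  (isNilpotent_trace_of_isNilpotent ⟨2, by rw [sq, ← mul_apply_mul, hx, map_zero]⟩).eq_zero

lemma mem_traceRadical {x : A} : x ∈ traceRadical F A ↔ ∀ a : A, traceMul F A (x * a) = 0 := by
  simp [traceRadical, LinearMap.ext_iff]

lemma mul_mem_traceRadical_left (a : A) {x : A} (hx : x ∈ traceRadical F A) :
    a * x ∈ traceRadical F A :=
  mem_traceRadical.2 fun b => by
    rw [mul_assoc, traceMul_mul_comm, mul_assoc]; exact mem_traceRadical.1 hx _

lemma mul_mem_traceRadical_right (a : A) {x : A} (hx : x ∈ traceRadical F A) :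
    x * a ∈ traceRadical F A :=
  mem_traceRadical.2 fun b => by rw [mul_assoc]; exact mem_traceRadical.1 hx _

lemma map_mem_traceRadical {δ : Module.End F A}
    (hδ : ∀ a b : A, δ (a * b) = δ a * b + a * δ b) {x : A} (hx : x ∈ traceRadical F A) :
    δ x ∈ traceRadical F A :=
  mem_traceRadical.2 fun b => by
    rw [← add_sub_cancel_right (δ x * b) (x * δ b), ← hδ, map_sub, traceMul_map_eq_zero hδ,
      mem_traceRadical.1 hx, sub_zero]

lemma traceMul_eq_zero_of_eq_top (hS : productSpan F A = ⊤) (hR : traceRadical F A = ⊤) :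
    traceMul F A = 0 := by
  refine ker_eq_top.1 (top_le_iff.1 (hS ▸ Submodule.span_le.2 ?_))
  rintro _ ⟨u, v, rfl⟩
  exact mem_traceRadical.1 (hR ▸ Submodule.mem_top) v

lemma exists_mul_pow_succ_eq (x : A) (k : ℕ) : ∃ y : A, mul F A x ^ (k + 1) = mul F A y := by
  induction k with
  | zero => exact ⟨x, pow_one _⟩
  | succ k ih =>
    obtain ⟨y, hy⟩ := ih
    exact ⟨y * x, by rw [pow_succ, hy, mul_apply_mul]⟩

lemma isNilpotent_mul_of_traceMul_eq_zero [CharZero F] [FiniteDimensional F A]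
    (hτ : traceMul F A = 0) (x : A) : IsNilpotent (mul F A x) :=
  isNilpotent_of_trace_pow_eq_zero fun k => by
    obtain ⟨y, hy⟩ := exists_mul_pow_succ_eq (F := F) x k
    rw [hy, ← traceMul_apply, hτ, LinearMap.zero_apply]

variable (F A) in
def mulLieSubalgebra : LieSubalgebra F (Module.End F A) :=
  { range (mul F A) with
    lie_mem' := by
      rintro _ _ ⟨u, rfl⟩ ⟨v, rfl⟩
      exact ⟨u * v - v * u, by rw [map_sub, mul_apply_mul, mul_apply_mul, Ring.lie_def]⟩ }

lemma subsingleton_of_isNilpotent_mul [FiniteDimensional F A] (hS : productSpan F A = ⊤)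
    (hnil : ∀ x : A, IsNilpotent (mul F A x)) : Subsingleton A := by
  let E := mulLieSubalgebra F A
  have hE : LieModule.IsNilpotent E A := by
    rw [LieModule.isNilpotent_iff_forall' (R := F)]
    rintro ⟨_, x, rfl⟩
    exact hnil x
  have hlie : ⁅(⊤ : LieIdeal F E), (⊤ : LieSubmodule F E A)⁆ = ⊤ := by
    have hle : productSpan F A ≤ ⁅(⊤ : LieIdeal F E), (⊤ : LieSubmodule F E A)⁆.toSubmodule := by
      refine Submodule.span_le.2 ?_
      rintro _ ⟨u, v, rfl⟩
      exact LieSubmodule.lie_mem_lie (x := (⟨mul F A u, u, rfl⟩ : E)) (m := v)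
        (LieSubmodule.mem_top _) (LieSubmodule.mem_top _)
    exact top_le_iff.1 fun x _ => hle (hS ▸ Submodule.mem_top)
  have hlcs : ∀ k, LieModule.lowerCentralSeries F E A k = ⊤ := by
    intro k
    induction k with
    | zero => rfl
    | succ k ih => rw [LieModule.lowerCentralSeries_succ, ih, hlie]
  obtain ⟨k, hk⟩ := hE.nilpotent (R := F)
  exact LieSubmodule.subsingleton_iff F E A |>.1 (subsingleton_of_bot_eq_top (hk ▸ hlcs k))

end NonUnitalAlgebra

/-- Let `A` be a finite dimensional associative (not necessarily unital)
algebra over a field `F` of characteristic `0`, and let `𝔤` be a Lie algebra acting on `A`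
by derivations.  If the only `𝔤`-invariant two-sided ideals of `A` are `0` and `A`, then
either `A` is semisimple (its Jacobson radical is zero; for a finite dimensional algebra
this means that `A` has no nonzero two-sided ideal with zero multiplication) or `A·A = 0`. -/
theorem semisimple_or_squareZero_of_gInvariant_simple
    (F : Type*) [Field F] [CharZero F]
    (A : Type*) [NonUnitalRing A] [Module F A] [IsScalarTower F A A] [SMulCommClass F A A]
    [FiniteDimensional F A]
    (𝔤 : Type*) [LieRing 𝔤] [LieAlgebra F 𝔤]
    -- `𝔤` acts on `A` by derivations
    (ρ : 𝔤 →ₗ⁅F⁆ Module.End F A)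
    (hder : ∀ x : 𝔤, ∀ a b : A, ρ x (a * b) = ρ x a * b + a * ρ x b)
    -- the only `𝔤`-invariant two-sided ideals of `A` are `0` and `A`
    (hsimple : ∀ I : Submodule F A,
      (∀ a : A, ∀ x ∈ I, a * x ∈ I ∧ x * a ∈ I) →
      (∀ x : 𝔤, ∀ a ∈ I, ρ x a ∈ I) → I = ⊥ ∨ I = ⊤) :
    (∀ I : Submodule F A, (∀ a : A, ∀ x ∈ I, a * x ∈ I ∧ x * a ∈ I) →
        (∀ x ∈ I, ∀ y ∈ I, x * y = 0) → I = ⊥) ∨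
    (∀ a b : A, a * b = 0) := by
  rcases hsimple (productSpan F A)
    (fun a x _ => ⟨mul_mem_productSpan a x, mul_mem_productSpan x a⟩)
    (fun g _ => map_mem_productSpan (hder g)) with hS | hS
  · exact Or.inr fun a b => (Submodule.mem_bot F).1 (hS ▸ mul_mem_productSpan a b)
  refine Or.inl fun I hI hsq => ?_
  have hIR : I ≤ traceRadical F A := fun x hx => mem_traceRadical.2 fun a =>
    traceMul_eq_zero_of_mul_self_eq_zero (hsq _ (hI a x hx).2 _ (hI a x hx).2)
  rcases hsimple (traceRadical F A)
    (fun a x hx => ⟨mul_mem_traceRadical_left a hx, mul_mem_traceRadical_right a hx⟩)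
    (fun g _ => map_mem_traceRadical (hder g)) with hR | hR
  · exact le_bot_iff.1 (hR ▸ hIR)
  have := subsingleton_of_isNilpotent_mul hS
    (isNilpotent_mul_of_traceMul_eq_zero (traceMul_eq_zero_of_eq_top hS hR))
  exact Subsingleton.elim I ⊥
end

section
/- Let C be a coalgebra over a field F, V a finite dimensional right C-comodule, and ζ : C* → End_F(V) the algebra homomorphism giving the induced left C*-module structure on V. If A ⊆ C* is a subalgebra that separates the points of C (i.e., for every nonzero c ∈ C there is φ ∈ A with φ(c) ≠ 0), then ζ(A) = ζ(C*). -/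
open TensorProduct Module

/-!
`ζ φ` only depends on the restriction of `φ` to the coefficient space of `ρ`, spanned by
the elements `(f ⊗ id)(ρ v)` with `f ∈ V*`, `v ∈ V`, because
`f (ζ φ v) = φ ((f ⊗ id)(ρ v))`.
That space is finite dimensional, and a subspace of `C*` separating the points of a finite
dimensional subspace `W ⊆ C` restricts onto all of `W*`.
-/

theorem Submodule.exists_mem_eqOn_of_separatesPoints {K V : Type*} [Field K] [AddCommGroup V]
    [Module K V] (W : Submodule K V) [FiniteDimensional K W] (A : Submodule K (Dual K V))
    (hA : ∀ w ∈ W, w ≠ 0 → ∃ φ ∈ A, φ w ≠ 0) (φ : Dual K V) :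
    ∃ ψ ∈ A, Set.EqOn ψ φ W := by
  have hcoann : (A.map W.dualRestrict).dualCoannihilator = ⊥ := by
    refine (Submodule.eq_bot_iff _).2 fun w hw => ?_
    by_contra hne
    obtain ⟨ψ, hψA, hψw⟩ := hA w w.2 (by simpa using hne)
    exact hψw ((Submodule.mem_dualCoannihilator _).1 hw _ ⟨ψ, hψA, rfl⟩)
  have htop : A.map W.dualRestrict = ⊤ := by
    simpa [hcoann] using
      (Subspace.dualCoannihilator_dualAnnihilator_eq (W := A.map W.dualRestrict)).symm
  obtain ⟨ψ, hψA, hψ⟩ := htop.ge (Submodule.mem_top (x := W.dualRestrict φ))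
  exact ⟨ψ, hψA, fun w hw => LinearMap.congr_fun hψ ⟨w, hw⟩⟩

section Coefficients

variable {R V C : Type*} [CommRing R] [AddCommGroup V] [Module R V] [AddCommGroup C] [Module R C]

def dualAction (ρ : V →ₗ[R] V ⊗[R] C) (φ : Dual R C) : V →ₗ[R] V :=
  (TensorProduct.rid R V).toLinearMap ∘ₗ map LinearMap.id φ ∘ₗ ρ

def coefficientMap (ρ : V →ₗ[R] V ⊗[R] C) : Dual R V ⊗[R] V →ₗ[R] C :=
  lift (LinearMap.lcomp R C ρ ∘ₗ
    LinearMap.llcomp R (V ⊗[R] C) (R ⊗[R] C) C (TensorProduct.lid R C).toLinearMap ∘ₗ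
    LinearMap.rTensorHom C)

theorem coefficientMap_tmul (ρ : V →ₗ[R] V ⊗[R] C) (f : Dual R V) (v : V) :
    coefficientMap ρ (f ⊗ₜ v) = TensorProduct.lid R C (f.rTensor C (ρ v)) :=
  rfl

theorem apply_rid_lTensor_eq_apply_lid_rTensor (f : Dual R V) (φ : Dual R C) (x : V ⊗[R] C) :
    f (TensorProduct.rid R V (φ.lTensor V x)) = φ (TensorProduct.lid R C (f.rTensor C x)) := by
  induction x using TensorProduct.induction_on with
  | zero => simp
  | tmul v c => simp [mul_comm]
  | add x y hx hy => simp only [map_add, hx, hy]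

theorem dualAction_eq_of_eqOn_range_coefficientMap [Projective R V] (ρ : V →ₗ[R] V ⊗[R] C)
    {φ ψ : Dual R C} (h : Set.EqOn φ ψ (LinearMap.range (coefficientMap ρ))) :
    dualAction ρ φ = dualAction ρ ψ := by
  ext v
  rw [← sub_eq_zero, ← Module.forall_dual_apply_eq_zero_iff R]
  intro f
  have hf : ∀ χ : Dual R C, f (dualAction ρ χ v) = χ (coefficientMap ρ (f ⊗ₜ v)) :=
    fun χ => by rw [coefficientMap_tmul]; exact apply_rid_lTensor_eq_apply_lid_rTensor f χ (ρ v)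
  rw [map_sub, hf, hf, h (LinearMap.mem_range_self _ _), sub_self]

end Coefficients

theorem dense_subalgebra_same_operators_general
    (F : Type*) [Field F]
    (C : Type*) [AddCommGroup C] [Module F C]
    (V : Type*) [AddCommGroup V] [Module F V] [FiniteDimensional F V]
    -- the right `C`-comodule structure on `V`
    (ρ : V →ₗ[F] V ⊗[F] C)
    -- the induced `C*`-action on `V`
    (ζ : (C →ₗ[F] F) → (V →ₗ[F] V))
    (hζ : ∀ φ : C →ₗ[F] F, ζ φ =
      (TensorProduct.rid F V).toLinearMap ∘ₗ TensorProduct.map LinearMap.id φ ∘ₗ ρ)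
    (A : Submodule F (C →ₗ[F] F))
    -- `A` separates the points of `C`
    (hdense : ∀ c : C, c ≠ 0 → ∃ φ ∈ A, φ c ≠ 0) :
    ζ '' (A : Set (C →ₗ[F] F)) = Set.range ζ := by
  obtain rfl : ζ = dualAction ρ := funext hζ
  refine (Set.image_subset_range _ _).antisymm ?_
  rintro _ ⟨φ, rfl⟩
  obtain ⟨ψ, hψA, hψ⟩ :=
    (LinearMap.range (coefficientMap ρ)).exists_mem_eqOn_of_separatesPoints A
      (fun c _ => hdense c) φ
  exact ⟨ψ, hψA, dualAction_eq_of_eqOn_range_coefficientMap ρ hψ⟩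

/-- Let `C` be a coalgebra over a field `F`, `V` a finite dimensional right
`C`-comodule, and `ζ : C* → End_F(V)` the induced map, `ζ(φ)(v) = (id ⊗ φ)(ρ(v))`.  If
`A ⊆ C*` is a subalgebra (for the convolution product) separating the points of `C`, then
`ζ(A) = ζ(C*)`. -/
theorem dense_subalgebra_same_operators
    (F : Type*) [Field F]
    (C : Type*) [AddCommGroup C] [Module F C] [Coalgebra F C]
    (V : Type*) [AddCommGroup V] [Module F V] [FiniteDimensional F V]
    -- the right `C`-comodule structure on `V`
    (ρ : V →ₗ[F] V ⊗[F] C)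
    (hcounit : ∀ v : V, (TensorProduct.rid F V)
      ((TensorProduct.map LinearMap.id (Coalgebra.counit (R := F) (A := C))) (ρ v)) = v)
    (hcoassoc : ∀ v : V, (TensorProduct.assoc F V C C)
        ((TensorProduct.map ρ LinearMap.id) (ρ v)) =
      (TensorProduct.map LinearMap.id (Coalgebra.comul (R := F) (A := C))) (ρ v))
    -- the induced `C*`-action on `V`
    (ζ : (C →ₗ[F] F) → (V →ₗ[F] V))
    (hζ : ∀ φ : C →ₗ[F] F, ζ φ =
      (TensorProduct.rid F V).toLinearMap ∘ₗ TensorProduct.map LinearMap.id φ ∘ₗ ρ)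
    -- `A` is a subalgebra of `C*` for the convolution product
    (A : Submodule F (C →ₗ[F] F))
    (hA1 : Coalgebra.counit (R := F) (A := C) ∈ A)
    (hAmul : ∀ φ ∈ A, ∀ ψ ∈ A,
      (LinearMap.mul' F F ∘ₗ TensorProduct.map φ ψ ∘ₗ Coalgebra.comul (R := F) (A := C)) ∈ A)
    -- `A` separates the points of `C`
    (hdense : ∀ c : C, c ≠ 0 → ∃ φ ∈ A, φ c ≠ 0) :
    ζ '' (A : Set (C →ₗ[F] F)) = Set.range ζ :=
  dense_subalgebra_same_operators_general F C V ρ ζ hζ A hdense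
end

section
/- Let A be a finite dimensional associative algebra over an algebraically closed field F of characteristic 0 with a rational action of a reductive affine algebraic group G by automorphisms and anti-automorphisms, and suppose the Jacobson radical J of A satisfies J² = 0. Assume there exists a G₀-equivariant algebra section φ : A/J → A of the projection π : A → A/J, where G₀ ⊆ G is the index-2 subgroup acting by automorphisms, and fix g ∈ G \ G₀. Then the map φ̃(a) = (φ(a) + g·φ(g⁻¹·a))/2 is a G-equivariant algebra homomorphism section of π. -/
/-!
Write `ψ q = g • φ (g⁻¹ • q)`. Since `g` and `g⁻¹` both reverse products, `ψ` is again a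
multiplicative section of `π`, and by index two the twists `q ↦ k • f (k⁻¹ • q)` by elements
`k ∈ G` permute the pair `{φ, ψ}`, so their average is `G`-equivariant. Multiplicativity of the
average reduces to `φ q * ψ r + ψ q * φ r = φ q * φ r + ψ q * ψ r`, which is
`(φ q - ψ q) * (φ r - ψ r) = 0`, a product of two elements of `J = ker π`.
-/

section Twist

variable {G Q A : Type*} [Group G] [MulAction G Q]

def twist [MulAction G A] (g : G) (f : Q → A) : Q → A := fun q => g • f (g⁻¹ • q)

section MulAction

variable [MulAction G A]

theorem twist_twist (g h : G) (f : Q → A) : twist g (twist h f) = twist (g * h) f := by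
  funext q
  simp only [twist, mul_smul, mul_inv_rev]

theorem twist_eq_self_iff {g : G} {f : Q → A} : twist g f = f ↔ ∀ q, f (g • q) = g • f q := by
  refine ⟨fun h q => ?_, fun h => funext fun q => ?_⟩
  · calc f (g • q) = twist g f (g • q) := by rw [h]
      _ = g • f q := by simp only [twist, inv_smul_smul]
  · simp only [twist, ← h, smul_inv_smul]

theorem twist_eq_twist_of_index_two {H : Subgroup G} (hH : H.index = 2) {f : Q → A}
    (hf : ∀ h ∈ H, twist h f = f) {g k : G} (hg : g ∉ H) (hk : k ∉ H) :
    twist k f = twist g f := by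
  have hgk : g⁻¹ * k ∈ H := by
    rw [Subgroup.mul_mem_iff_of_index_two hH, inv_mem_iff]
    exact iff_of_false hg hk
  calc twist k f = twist (g * (g⁻¹ * k)) f := by rw [mul_inv_cancel_left]
    _ = twist g f := by rw [← twist_twist, hf _ hgk]

theorem twist_mul_of_smul_mul_rev [Mul Q] [Mul A] {g : G} {f : Q → A}
    (hA : ∀ a b : A, g • (a * b) = g • b * g • a)
    (hQ : ∀ q r : Q, g⁻¹ • (q * r) = g⁻¹ • r * g⁻¹ • q)
    (hf : ∀ q r, f (q * r) = f q * f r) (q r : Q) :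
    twist g f (q * r) = twist g f q * twist g f r := by
  simp only [twist, hQ, hf, hA]

end MulAction

section DistribMulAction

variable [AddCommMonoid A] [DistribMulAction G A]

theorem twist_add (g : G) (f f' : Q → A) : twist g (f + f') = twist g f + twist g f' := by
  funext q
  exact smul_add g (f (g⁻¹ • q)) (f' (g⁻¹ • q))

theorem twist_smul {F : Type*} [SMul F A] [SMulCommClass G F A] (g : G) (c : F) (f : Q → A) :
    twist g (c • f) = c • twist g f := by
  funext q
  exact smul_comm g c (f (g⁻¹ • q))

theorem twist_smul_add_twist {F : Type*} [SMul F A] [SMulCommClass G F A] {H : Subgroup G}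
    (hH : H.index = 2) {f : Q → A} (hf : ∀ h ∈ H, twist h f = f) {g : G} (hg : g ∉ H)
    (c : F) (k : G) :
    twist k (c • (f + twist g f)) = c • (f + twist g f) := by
  rw [twist_smul, twist_add, twist_twist]
  by_cases hk : k ∈ H
  · have hkg : k * g ∉ H := by
      rw [Subgroup.mul_mem_iff_of_index_two hH]
      exact fun h => hg (h.1 hk)
    rw [hf k hk, twist_eq_twist_of_index_two hH hf hg hkg]
  · have hkg : k * g ∈ H := by
      rw [Subgroup.mul_mem_iff_of_index_two hH]
      exact iff_of_false hk hg
    rw [hf _ hkg, twist_eq_twist_of_index_two hH hf hg hk, add_comm]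

end DistribMulAction

end Twist

theorem smul_mul_rev_of_surjective {M A Q : Type*} [Mul A] [Mul Q] [SMul M A] [SMul M Q]
    {π : A → Q} (hmul : ∀ a b, π (a * b) = π a * π b) (hsurj : Function.Surjective π) {k : M}
    (hequiv : ∀ a, π (k • a) = k • π a) (hanti : ∀ a b : A, k • (a * b) = k • b * k • a)
    (q r : Q) : k • (q * r) = k • r * k • q := by
  obtain ⟨a, rfl⟩ := hsurj q
  obtain ⟨b, rfl⟩ := hsurj r
  rw [← hmul, ← hequiv, hanti, hmul, hequiv, hequiv]

section Average

variable {F A : Type*} [DivisionRing F]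

-- No compatibility of the `F`-scalars with the product is assumed: `2⁻¹` passes through
-- multiplication because multiplication is biadditive.
theorem inv_two_smul_mul_inv_two_smul [NonUnitalNonAssocSemiring A] [Module F A] (x y : A) :
    ((2 : F)⁻¹ • x) * ((2 : F)⁻¹ • y) = (2 : F)⁻¹ • (2 : F)⁻¹ • (x * y) := by
  have h := map_inv_natCast_smul (AddMonoidHom.mulLeft ((2 : F)⁻¹ • x)) F F 2 y
  have h' := map_inv_natCast_smul (AddMonoidHom.mulRight y) F F 2 x
  simp only [AddMonoidHom.coe_mulLeft, AddMonoidHom.coe_mulRight, Nat.cast_ofNat] at h h'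
  rw [h, h']

theorem inv_two_smul_add_mul_inv_two_smul_add [NonUnitalNonAssocRing A] [Module F A]
    [NeZero (2 : F)] {x y u v : A} (h : (x - y) * (u - v) = 0) :
    ((2 : F)⁻¹ • (x + y)) * ((2 : F)⁻¹ • (u + v)) = (2 : F)⁻¹ • (x * u + y * v) := by
  have hcross : (x + y) * (u + v) = (2 : F) • (x * u + y * v) := by
    rw [two_smul, eq_comm, ← sub_eq_zero, ← h]
    simp only [add_mul, mul_add, sub_mul, mul_sub]
    abel
  rw [inv_two_smul_mul_inv_two_smul, hcross, inv_smul_smul₀ two_ne_zero]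

end Average

theorem averaged_section_is_equivariant_hom_general
    (F : Type*) [Field F] [CharZero F]
    (A : Type*) [NonUnitalRing A] [Module F A]
    (G : Type*) [Group G] [DistribMulAction G A] [SMulCommClass G F A]
    (G₀ : Subgroup G) (hindex : G₀.index = 2)
    -- elements of `G₀` act by automorphisms, the others by anti-automorphisms
    (hanti : ∀ h ∉ G₀, ∀ a b : A, h • (a * b) = (h • b) * (h • a))
    -- `J` is the Jacobson radical of `A`: a `G`-invariant two-sided ideal with `J² = 0`
    -- containing every two-sided ideal with zero multiplication
    (J : Submodule F A)
    (hJ2 : ∀ x ∈ J, ∀ y ∈ J, x * y = 0)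
    -- the projection `π : A → A/J`, `G`-equivariantly
    (Q : Type*) [NonUnitalRing Q] [Module F Q] [DistribMulAction G Q]
    (π : A →ₗ[F] Q) (hπmul : ∀ a b : A, π (a * b) = π a * π b)
    (hπsurj : Function.Surjective π) (hπker : LinearMap.ker π = J)
    (hπequiv : ∀ k : G, ∀ a : A, π (k • a) = k • π a)
    -- the `G₀`-equivariant algebra section `φ`
    (φ : Q →ₗ[F] A)
    (hφsec : ∀ q : Q, π (φ q) = q)
    (hφmul : ∀ a b : Q, φ (a * b) = φ a * φ b)
    (hφequiv : ∀ h ∈ G₀, ∀ q : Q, φ (h • q) = h • φ q)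
    -- a fixed element `g ∈ G \ G₀`
    (g : G) (hg : g ∉ G₀) :
    -- `φ̃ = (φ(a) + g·φ(g⁻¹·a))/2` is a `G`-equivariant algebra homomorphism section of `π`
    (∀ q : Q, π ((2 : F)⁻¹ • (φ q + g • φ (g⁻¹ • q))) = q) ∧
    (∀ k : G, ∀ q : Q, (2 : F)⁻¹ • (φ (k • q) + g • φ (g⁻¹ • k • q)) =
      k • ((2 : F)⁻¹ • (φ q + g • φ (g⁻¹ • q)))) ∧
    (∀ q r : Q, (2 : F)⁻¹ • (φ (q * r) + g • φ (g⁻¹ • (q * r))) =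
      ((2 : F)⁻¹ • (φ q + g • φ (g⁻¹ • q))) * ((2 : F)⁻¹ • (φ r + g • φ (g⁻¹ • r)))) := by
  have hψsec (q : Q) : π (g • φ (g⁻¹ • q)) = q := by
    rw [hπequiv, hφsec, smul_inv_smul]
  have hφ_fixed (h : G) (hh : h ∈ G₀) : twist h φ = φ :=
    twist_eq_self_iff.2 (hφequiv h hh)
  have hQanti : ∀ q r : Q, g⁻¹ • (q * r) = g⁻¹ • r * g⁻¹ • q :=
    smul_mul_rev_of_surjective hπmul hπsurj (hπequiv g⁻¹) (hanti g⁻¹ (mt inv_mem_iff.1 hg))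
  have hdiff_mem (q : Q) : φ q - g • φ (g⁻¹ • q) ∈ J := by
    rw [← hπker, LinearMap.mem_ker, map_sub, hφsec, hψsec, sub_self]
  refine ⟨fun q => ?_, fun k q => ?_, fun q r => ?_⟩
  · rw [map_smul, map_add, hφsec, hψsec q, ← two_smul F q, inv_smul_smul₀ two_ne_zero]
  · exact twist_eq_self_iff.1 (twist_smul_add_twist hindex hφ_fixed hg (2 : F)⁻¹ k) q
  · have hψmul : g • φ (g⁻¹ • (q * r)) = g • φ (g⁻¹ • q) * g • φ (g⁻¹ • r) :=
      twist_mul_of_smul_mul_rev (hanti g hg) hQanti hφmul q r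
    rw [hφmul, hψmul]
    exact (inv_two_smul_add_mul_inv_two_smul_add (hJ2 _ (hdiff_mem q) _ (hdiff_mem r))).symm

/-- Let `A` be a finite dimensional associative algebra over an algebraically
closed field `F` of characteristic `0` with an action of a group `G` by automorphisms and
anti-automorphisms (the elements of the index-2 subgroup `G₀` act by automorphisms, the
others by anti-automorphisms), and suppose the Jacobson radical `J` of `A` satisfies
`J² = 0` and is `G`-invariant.  Assume there exists a `G₀`-equivariant algebra section
`φ : A/J → A` of the projection `π : A → A/J` (the quotient is modelled by a surjective
equivariant algebra homomorphism `π : A → Q` with kernel `J`), and fix `g ∈ G \ G₀`.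
Then `φ̃(a) = (φ(a) + g·φ(g⁻¹·a))/2` is a `G`-equivariant algebra homomorphism section
of `π`. -/
theorem averaged_section_is_equivariant_hom
    (F : Type*) [Field F] [IsAlgClosed F] [CharZero F]
    (A : Type*) [NonUnitalRing A] [Module F A] [FiniteDimensional F A]
    (G : Type*) [Group G] [DistribMulAction G A] [SMulCommClass G F A]
    (G₀ : Subgroup G) (hindex : G₀.index = 2)
    -- elements of `G₀` act by automorphisms, the others by anti-automorphisms
    (hauto : ∀ h ∈ G₀, ∀ a b : A, h • (a * b) = (h • a) * (h • b))
    (hanti : ∀ h ∉ G₀, ∀ a b : A, h • (a * b) = (h • b) * (h • a))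
    -- `J` is the Jacobson radical of `A`: a `G`-invariant two-sided ideal with `J² = 0`
    -- containing every two-sided ideal with zero multiplication
    (J : Submodule F A)
    (hJideal : ∀ a : A, ∀ x ∈ J, a * x ∈ J ∧ x * a ∈ J)
    (hJ2 : ∀ x ∈ J, ∀ y ∈ J, x * y = 0)
    (hJG : ∀ k : G, ∀ x ∈ J, k • x ∈ J)
    (hJrad : ∀ I : Submodule F A, (∀ a : A, ∀ x ∈ I, a * x ∈ I ∧ x * a ∈ I) →
      (∀ x ∈ I, ∀ y ∈ I, x * y = 0) → I ≤ J)
    -- the projection `π : A → A/J`, `G`-equivariantly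
    (Q : Type*) [NonUnitalRing Q] [Module F Q] [DistribMulAction G Q] [SMulCommClass G F Q]
    (π : A →ₗ[F] Q) (hπmul : ∀ a b : A, π (a * b) = π a * π b)
    (hπsurj : Function.Surjective π) (hπker : LinearMap.ker π = J)
    (hπequiv : ∀ k : G, ∀ a : A, π (k • a) = k • π a)
    -- the `G₀`-equivariant algebra section `φ`
    (φ : Q →ₗ[F] A)
    (hφsec : ∀ q : Q, π (φ q) = q)
    (hφmul : ∀ a b : Q, φ (a * b) = φ a * φ b)
    (hφequiv : ∀ h ∈ G₀, ∀ q : Q, φ (h • q) = h • φ q)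
    -- a fixed element `g ∈ G \ G₀`
    (g : G) (hg : g ∉ G₀) :
    -- `φ̃ = (φ(a) + g·φ(g⁻¹·a))/2` is a `G`-equivariant algebra homomorphism section of `π`
    (∀ q : Q, π ((2 : F)⁻¹ • (φ q + g • φ (g⁻¹ • q))) = q) ∧
    (∀ k : G, ∀ q : Q, (2 : F)⁻¹ • (φ (k • q) + g • φ (g⁻¹ • k • q)) =
      k • ((2 : F)⁻¹ • (φ q + g • φ (g⁻¹ • q)))) ∧
    (∀ q r : Q, (2 : F)⁻¹ • (φ (q * r) + g • φ (g⁻¹ • (q * r))) =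
      ((2 : F)⁻¹ • (φ q + g • φ (g⁻¹ • q))) * ((2 : F)⁻¹ • (φ r + g • φ (g⁻¹ • r)))) :=
  averaged_section_is_equivariant_hom_general F A G G₀ hindex hanti J hJ2 Q π hπmul hπsurj hπker
    hπequiv φ hφsec hφmul hφequiv g hg
end

section
/- Let A be a finite dimensional H-module algebra over a field F, where H is a Hopf algebra with bijective antipode S, and suppose A is semisimple as an associative algebra. Then A = B₁ ⊕ ... ⊕ B_q, a direct sum of H-invariant two-sided ideals, where each B_i is an H-simple algebra. -/
/-!
The `H`-invariant two-sided ideals of `A` form a complete sublattice of the lattice of subspaces,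
so they form a modular lattice of finite height. This lattice is complemented. In a semisimple
ring a two-sided ideal `J` has an identity element, so `A = J ⊕ ann_l(J)`. The left annihilator
is `H`-invariant again because `(h • a) * x = ∑ h₍₁₎ • (a * (S(h₍₂₎) • x))`. A complemented
modular lattice of finite height is the independent supremum of finitely many atoms, and its
atoms are the `H`-simple ideals.
-/

open TensorProduct Coalgebra HopfAlgebra

theorem HopfAlgebra.sum_tmul_mul_antipode_eq {F H : Type*} [CommSemiring F] [Semiring H]
    [HopfAlgebra F H] {ι : Type*} {κ : ι → Type*} {h : H} (𝓡 : Repr F h ι)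
    (𝓡₁ : ∀ i, Repr F (𝓡.left i) (κ i)) :
    ∑ i ∈ 𝓡.index, ∑ j ∈ (𝓡₁ i).index,
      (𝓡₁ i).left j ⊗ₜ[F] ((𝓡₁ i).right j * antipode F (𝓡.right i)) = h ⊗ₜ 1 := by
  have hcoassoc := congrArg (LinearMap.lTensor H (LinearMap.mul' F H ∘ₗ (antipode F).lTensor H))
    (sum_tmul_tmul_eq 𝓡 𝓡₁ fun i => ℛ F (𝓡.right i))
  have hcounit := congrArg (TensorProduct.rid F H) (sum_tmul_counit_eq 𝓡)
  simp only [map_sum, LinearMap.lTensor_tmul, LinearMap.comp_apply, LinearMap.mul'_apply,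
    rid_tmul] at hcoassoc hcounit
  simp only [← tmul_sum, sum_mul_antipode_eq_smul, tmul_smul, smul_tmul'] at hcoassoc
  rw [hcoassoc, ← sum_tmul, hcounit, one_smul]

section ModuleAlgebra

variable {F H A : Type*} [CommSemiring F] [Semiring H] [Semiring A] [Algebra F A]

noncomputable def actMul [Algebra F H] (ρ : H →ₐ[F] Module.End F A) (a b : A) :
    H ⊗[F] H →ₗ[F] A :=
  lift <| (LinearMap.mul F A).compl₁₂ (LinearMap.applyₗ a ∘ₗ ρ.toLinearMap)
    (LinearMap.applyₗ b ∘ₗ ρ.toLinearMap)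

@[simp]
theorem actMul_tmul [Algebra F H] (ρ : H →ₐ[F] Module.End F A) (a b : A) (u v : H) :
    actMul ρ a b (u ⊗ₜ v) = ρ u a * ρ v b :=
  rfl

/-- `h • (a * b) = ∑ (h₍₁₎ • a) * (h₍₂₎ • b)` -/
def IsModuleAlgebra [Bialgebra F H] (ρ : H →ₐ[F] Module.End F A) : Prop :=
  ∀ (h : H) (a b : A), ρ h (a * b) = actMul ρ a b (comul h)

namespace IsModuleAlgebra

variable {ι : Type*}

theorem of_exists_sum [Bialgebra F H] {ρ : H →ₐ[F] Module.End F A}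
    (hact : ∀ h : H, ∃ (k : ℕ) (h₁ h₂ : Fin k → H),
      comul (R := F) h = ∑ i, h₁ i ⊗ₜ[F] h₂ i ∧
      ∀ a b : A, ρ h (a * b) = ∑ i, ρ (h₁ i) a * ρ (h₂ i) b) :
    IsModuleAlgebra ρ := by
  intro h a b
  obtain ⟨k, h₁, h₂, hcomul, hmul⟩ := hact h
  simp [hcomul, hmul, map_sum]

theorem map_mul_eq_sum [Bialgebra F H] {ρ : H →ₐ[F] Module.End F A} (hρ : IsModuleAlgebra ρ)
    {h : H} (𝓡 : Repr F h ι) (a b : A) :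
    ρ h (a * b) = ∑ i ∈ 𝓡.index, ρ (𝓡.left i) a * ρ (𝓡.right i) b := by
  simp [hρ h, ← 𝓡.eq, map_sum]

theorem map_apply_mul_eq_sum_antipode [HopfAlgebra F H] {ρ : H →ₐ[F] Module.End F A}
    (hρ : IsModuleAlgebra ρ) {h : H} (𝓡 : Repr F h ι) (a x : A) :
    ρ h a * x = ∑ i ∈ 𝓡.index, ρ (𝓡.left i) (a * ρ (antipode F (𝓡.right i)) x) := by
  -- apply `u ⊗ v ↦ (u • a) * (v • x)` to `h₍₁₎ ⊗ h₍₂₎ S(h₍₃₎) = h ⊗ 1`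
  have := congrArg (actMul ρ a x) (sum_tmul_mul_antipode_eq 𝓡 fun i => ℛ F (𝓡.left i))
  simp only [map_sum, actMul_tmul, map_mul, map_one, Module.End.mul_apply, Module.End.one_apply,
    ← hρ.map_mul_eq_sum] at this
  exact this.symm

end IsModuleAlgebra

end ModuleAlgebra

section SemisimpleRing

variable {A : Type*} [Ring A] [IsSemisimpleRing A]

theorem IsSemisimpleRing.eq_zero_of_forall_mul_mul_eq_zero {x : A} (hx : ∀ a, x * a * x = 0) :
    x = 0 := by
  obtain ⟨e, he, hspan⟩ := IsSemisimpleRing.ideal_eq_span_idempotent (Ideal.span {x})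
  obtain ⟨c, rfl⟩ : ∃ c, c * x = e :=
    Ideal.mem_span_singleton'.mp (hspan ▸ Ideal.mem_span_singleton_self e)
  obtain ⟨d, hd⟩ : ∃ d, d * (c * x) = x :=
    Ideal.mem_span_singleton'.mp (hspan ▸ Ideal.mem_span_singleton_self x)
  have : c * x = 0 := by rw [← he.eq, mul_assoc, ← mul_assoc x, hx, mul_zero]
  rw [← hd, this, mul_zero]

theorem IsSemisimpleRing.exists_mul_eq_self_of_isTwoSided (I : Ideal A) [I.IsTwoSided] :
    ∃ e ∈ I, ∀ y ∈ I, e * y = y ∧ y * e = y := by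
  obtain ⟨e, he, rfl⟩ := IsSemisimpleRing.ideal_eq_span_idempotent I
  have right_unit : ∀ y ∈ Ideal.span {e}, y * e = y := fun y hy => by
    obtain ⟨c, rfl⟩ := Ideal.mem_span_singleton'.mp hy
    rw [mul_assoc, he.eq]
  refine ⟨e, Ideal.mem_span_singleton_self e, fun y hy => ⟨?_, right_unit y hy⟩⟩
  -- `d := y - e * y` satisfies `e * d = 0` and `d * a = d * a * e`, so `d * a * d = 0`.
  have hd : y - e * y ∈ Ideal.span {e} := sub_mem hy (Ideal.mul_mem_left _ e hy)
  have hed : e * (y - e * y) = 0 := by rw [mul_sub, ← mul_assoc, he.eq, sub_self]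
  refine (sub_eq_zero.mp (eq_zero_of_forall_mul_mul_eq_zero fun a => ?_)).symm
  rw [← right_unit _ (Ideal.mul_mem_right a _ hd), mul_assoc _ e, hed, mul_zero]

end SemisimpleRing

namespace Submodule

variable {F A : Type*} [CommSemiring F]

def leftAnnihilator [Semiring A] [Algebra F A] (J : Submodule F A) : Submodule F A :=
  ⨅ y : J, LinearMap.ker (LinearMap.mulRight F (y : A))

theorem mem_leftAnnihilator [Semiring A] [Algebra F A] {J : Submodule F A} {b : A} :
    b ∈ J.leftAnnihilator ↔ ∀ y ∈ J, b * y = 0 := by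
  simp [leftAnnihilator]

theorem isCompl_leftAnnihilator [Ring A] [Algebra F A] [IsSemisimpleRing A] {J : Submodule F A}
    (hJ : ∀ a : A, ∀ x ∈ J, a * x ∈ J ∧ x * a ∈ J) : IsCompl J J.leftAnnihilator := by
  let I : Ideal A := { J.toAddSubmonoid with smul_mem' := fun a x hx => (hJ a x hx).1 }
  have : I.IsTwoSided := ⟨fun b hx => (hJ b _ hx).2⟩
  obtain ⟨e, he, hunit⟩ := IsSemisimpleRing.exists_mul_eq_self_of_isTwoSided I
  constructor
  · rw [disjoint_def]
    intro x hxJ hx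
    rw [← (hunit x hxJ).2]
    exact mem_leftAnnihilator.mp hx e he
  · rw [codisjoint_iff, eq_top_iff]
    intro b _
    refine mem_sup.mpr ⟨e * b, (hJ b e he).2, b - e * b, ?_, add_sub_cancel _ _⟩
    refine mem_leftAnnihilator.mpr fun y hy => ?_
    rw [sub_mul, mul_assoc, (hunit _ (hJ b y hy).1).1, sub_self]

theorem exists_mul_ne_zero_of_ne_bot [Ring A] [Algebra F A] [IsSemisimpleRing A]
    {J : Submodule F A} (hJ : ∀ a : A, ∀ x ∈ J, a * x ∈ J) (hne : J ≠ ⊥) :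
    ∃ a ∈ J, ∃ b ∈ J, a * b ≠ 0 := by
  obtain ⟨x, hx, hx0⟩ := (Submodule.ne_bot_iff J).mp hne
  by_contra! h
  exact hx0 (IsSemisimpleRing.eq_zero_of_forall_mul_mul_eq_zero fun a => by
    rw [mul_assoc]; exact h x hx _ (hJ a x hx))

end Submodule

namespace CompleteSublattice

variable {α : Type*} [CompleteLattice α]

instance [IsModularLattice α] (L : CompleteSublattice α) : IsModularLattice L :=
  ⟨fun {_ _ _} h => Subtype.coe_le_coe.mp
    (IsModularLattice.sup_inf_le_assoc_of_le _ (Subtype.coe_le_coe.mpr h))⟩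

theorem iSupIndep_coe_iff {L : CompleteSublattice α} {ι : Type*} {t : ι → L} :
    iSupIndep (fun i => (t i : α)) ↔ iSupIndep t := by
  simp only [iSupIndep_def, CompleteSublattice.disjoint_iff, coe_iSup]

end CompleteSublattice

namespace Module.End

variable {R M : Type*} [Semiring R] [AddCommMonoid M] [Module R M]

def invtCompleteSublattice (T : Set (Module.End R M)) : CompleteSublattice (Submodule R M) :=
  .mk' {p | ∀ f ∈ T, p ≤ p.comap f}
    (fun _ hS f hf => sSup_le fun _ hp => (hS hp f hf).trans (Submodule.comap_mono (le_sSup hp)))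
    (fun _ hS f hf _ hx =>
      Submodule.mem_sInf.mpr fun _ hp => hS hp f hf (Submodule.mem_sInf.mp hx _ hp))

theorem mem_invtCompleteSublattice {T : Set (Module.End R M)} {p : Submodule R M} :
    p ∈ invtCompleteSublattice T ↔ ∀ f ∈ T, ∀ x ∈ p, f x ∈ p :=
  Iff.rfl

end Module.End

section InvariantIdeals

variable {F H A : Type*} [CommSemiring F] [Semiring H]

def invariantIdeals [Algebra F H] [Semiring A] [Algebra F A] (ρ : H →ₐ[F] Module.End F A) :
    CompleteSublattice (Submodule F A) :=
  Module.End.invtCompleteSublattice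
    (Set.range (LinearMap.mulLeft F) ∪ Set.range (LinearMap.mulRight F) ∪ Set.range ρ)

theorem mem_invariantIdeals [Algebra F H] [Semiring A] [Algebra F A]
    {ρ : H →ₐ[F] Module.End F A} {I : Submodule F A} :
    I ∈ invariantIdeals ρ ↔
      (∀ a : A, ∀ x ∈ I, a * x ∈ I ∧ x * a ∈ I) ∧ ∀ h : H, ∀ x ∈ I, ρ h x ∈ I := by
  simp only [invariantIdeals, Module.End.mem_invtCompleteSublattice, Set.mem_union,
    Set.mem_range, or_imp, forall_and, forall_exists_index, forall_apply_eq_imp_iff,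
    LinearMap.mulLeft_apply, LinearMap.mulRight_apply, and_assoc]

theorem IsModuleAlgebra.leftAnnihilator_mem_invariantIdeals [HopfAlgebra F H] [Semiring A]
    [Algebra F A] {ρ : H →ₐ[F] Module.End F A} (hρ : IsModuleAlgebra ρ) {J : Submodule F A}
    (hJ : J ∈ invariantIdeals ρ) : J.leftAnnihilator ∈ invariantIdeals ρ := by
  obtain ⟨hJideal, hJinv⟩ := mem_invariantIdeals.mp hJ
  simp only [mem_invariantIdeals, Submodule.mem_leftAnnihilator]
  refine ⟨fun a b hb => ⟨fun y hy => ?_, fun y hy => ?_⟩, fun h b hb y hy => ?_⟩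
  · rw [mul_assoc, hb y hy, mul_zero]
  · rw [mul_assoc, hb _ (hJideal a y hy).1]
  · rw [hρ.map_apply_mul_eq_sum_antipode (ℛ F h)]
    exact Finset.sum_eq_zero fun i _ => by rw [hb _ (hJinv _ y hy), map_zero]

theorem IsModuleAlgebra.complementedLattice_invariantIdeals [HopfAlgebra F H] [Ring A]
    [Algebra F A] [IsSemisimpleRing A] {ρ : H →ₐ[F] Module.End F A} (hρ : IsModuleAlgebra ρ) :
    ComplementedLattice (invariantIdeals ρ) :=
  CompleteSublattice.isComplemented_iff.mpr fun J hJ =>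
    ⟨J.leftAnnihilator, hρ.leftAnnihilator_mem_invariantIdeals hJ,
      Submodule.isCompl_leftAnnihilator (mem_invariantIdeals.mp hJ).1⟩

end InvariantIdeals

theorem isHSimple_of_isAtom {F H A : Type*} [CommSemiring F] [Semiring H] [Algebra F H]
    [Ring A] [Algebra F A] [IsSemisimpleRing A]
    {ρ : H →ₐ[F] Module.End F A} {J : invariantIdeals ρ} (hJ : IsAtom J) :
    (J : Submodule F A) ≠ ⊥ ∧ (∃ a ∈ (J : Submodule F A), ∃ b ∈ (J : Submodule F A), a * b ≠ 0) ∧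
      ∀ K : Submodule F A, K ≤ J → (∀ a : A, ∀ x ∈ K, a * x ∈ K ∧ x * a ∈ K) →
        (∀ h : H, ∀ x ∈ K, ρ h x ∈ K) → K = ⊥ ∨ K = J := by
  have hne : (J : Submodule F A) ≠ ⊥ := fun h => hJ.1 (Subtype.ext h)
  refine ⟨hne, Submodule.exists_mul_ne_zero_of_ne_bot
    (fun a x hx => ((mem_invariantIdeals.mp J.2).1 a x hx).1) hne, fun K hKJ hK hKinv => ?_⟩
  have hmem : K ∈ invariantIdeals ρ := mem_invariantIdeals.mpr ⟨hK, hKinv⟩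
  rcases (hJ.le_iff (x := ⟨K, hmem⟩)).mp hKJ with h | h
  · exact .inl congr(($h : Submodule F A))
  · exact .inr congr(($h : Submodule F A))

theorem hInvariant_decomposition_of_semisimple_general
    (F : Type*) [Field F]
    (H : Type*) [Semiring H] [HopfAlgebra F H]
    (A : Type*) [Ring A] [Algebra F A] [FiniteDimensional F A] [IsSemisimpleRing A]
    -- the `H`-module structure on `A`
    (ρ : H →ₐ[F] Module.End F A)
    -- `A` is an `H`-module algebra: `h(ab) = Σ (h₍₁₎a)(h₍₂₎b)`
    (hact : ∀ h : H, ∃ (k : ℕ) (h₁ h₂ : Fin k → H),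
      Coalgebra.comul (R := F) h = ∑ i, h₁ i ⊗ₜ[F] h₂ i ∧
      ∀ a b : A, ρ h (a * b) = ∑ i, ρ (h₁ i) a * ρ (h₂ i) b) :
    ∃ (q : ℕ) (B : Fin q → Submodule F A),
      DirectSum.IsInternal B ∧
      -- the `B i` are `H`-invariant two-sided ideals
      (∀ i, ∀ a : A, ∀ x ∈ B i, a * x ∈ B i ∧ x * a ∈ B i) ∧
      (∀ i, ∀ h : H, ∀ x ∈ B i, ρ h x ∈ B i) ∧
      -- each `B i` is `H`-simple: nonzero, nonzero multiplication, no proper nonzero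
      -- `H`-invariant two-sided ideals
      (∀ i, B i ≠ ⊥ ∧ (∃ a ∈ B i, ∃ b ∈ B i, a * b ≠ 0) ∧
        ∀ J : Submodule F A, J ≤ B i →
          (∀ a : A, ∀ x ∈ J, a * x ∈ J ∧ x * a ∈ J) →
          (∀ h : H, ∀ x ∈ J, ρ h x ∈ J) → J = ⊥ ∨ J = B i) := by
  have := (IsModuleAlgebra.of_exists_sum hact).complementedLattice_invariantIdeals
  have := CompleteLattice.isCompactlyGenerated_of_wellFoundedGT (α := invariantIdeals ρ)
  obtain ⟨s, hind, hsup, hatom⟩ := exists_sSupIndep_of_sSup_atoms_eq_top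
    (sSup_atoms_eq_top (α := invariantIdeals ρ))
  have : Finite s := (WellFoundedGT.finite_of_sSupIndep hind).to_subtype
  let e := (Finite.equivFin s).symm
  let B i : invariantIdeals ρ := e i
  refine ⟨Nat.card s, fun i => B i, ?_, fun i => (mem_invariantIdeals.mp (B i).2).1,
    fun i => (mem_invariantIdeals.mp (B i).2).2, fun i => isHSimple_of_isAtom (hatom (e i).2)⟩
  apply DirectSum.isInternal_submodule_of_iSupIndep_of_iSup_eq_top
  · exact CompleteSublattice.iSupIndep_coe_iff.mpr (((sSupIndep_iff s).mp hind).comp e.injective)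
  · rw [← CompleteSublattice.coe_iSup, e.iSup_comp (g := fun x : s => (x : invariantIdeals ρ)),
      ← sSup_eq_iSup', hsup, CompleteSublattice.coe_top]

/-- Let `A` be a finite dimensional `H`-module algebra over a field `F`,
where `H` is a Hopf algebra with bijective antipode, and suppose `A` is semisimple as an
associative algebra.  Then `A = B₁ ⊕ … ⊕ B_q`, a direct sum of `H`-invariant two-sided
ideals, with each `Bᵢ` an `H`-simple algebra. -/
theorem hInvariant_decomposition_of_semisimple
    (F : Type*) [Field F]
    (H : Type*) [Semiring H] [HopfAlgebra F H]
    (hS : Function.Bijective (HopfAlgebra.antipode (R := F) (A := H)))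
    (A : Type*) [Ring A] [Algebra F A] [FiniteDimensional F A] [IsSemisimpleRing A]
    -- the `H`-module structure on `A`
    (ρ : H →ₐ[F] Module.End F A)
    -- `A` is an `H`-module algebra: `h(ab) = Σ (h₍₁₎a)(h₍₂₎b)`
    (hact : ∀ h : H, ∃ (k : ℕ) (h₁ h₂ : Fin k → H),
      Coalgebra.comul (R := F) h = ∑ i, h₁ i ⊗ₜ[F] h₂ i ∧
      ∀ a b : A, ρ h (a * b) = ∑ i, ρ (h₁ i) a * ρ (h₂ i) b) :
    ∃ (q : ℕ) (B : Fin q → Submodule F A),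
      DirectSum.IsInternal B ∧
      -- the `B i` are `H`-invariant two-sided ideals
      (∀ i, ∀ a : A, ∀ x ∈ B i, a * x ∈ B i ∧ x * a ∈ B i) ∧
      (∀ i, ∀ h : H, ∀ x ∈ B i, ρ h x ∈ B i) ∧
      -- each `B i` is `H`-simple: nonzero, nonzero multiplication, no proper nonzero
      -- `H`-invariant two-sided ideals
      (∀ i, B i ≠ ⊥ ∧ (∃ a ∈ B i, ∃ b ∈ B i, a * b ≠ 0) ∧
        ∀ J : Submodule F A, J ≤ B i →
          (∀ a : A, ∀ x ∈ J, a * x ∈ J ∧ x * a ∈ J) →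
          (∀ h : H, ∀ x ∈ J, ρ h x ∈ J) → J = ⊥ ∨ J = B i) :=
  hInvariant_decomposition_of_semisimple_general F H A ρ hact
end

section
/- Let A be a finite dimensional associative algebra with a generalized H-action over a field F of characteristic 0, and let I ⊆ A be an H-invariant ideal with Iᵖ = 0. Let λ = (λ₁, ..., λ_s) ⊢ n be a partition with Σ_{k > dim A − dim I} λ_k ≥ p. Then for every Young tableau T_λ of shape λ and every multilinear H-polynomial f ∈ P_n^H, the element e*_{T_λ} f = b_{T_λ} a_{T_λ} f is a polynomial H-identity of A; consequently the multiplicity m(A, H, λ) of χ(λ) in the n-th cocharacter of A is zero. -/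
open scoped Classical

/-- The left-normed evaluation of a word `x₁ x₂ ⋯ x_k` in an associative algebra
(the empty word evaluates to `0`). -/
noncomputable def evalWord {A : Type*} [NonUnitalRing A] : List A → A
  | [] => 0
  | [x] => x
  | x :: y :: l => evalWord ((x * y) :: l)
termination_by l => l.length

/-- The space of `n`-linear functions `Aⁿ → A` representable by multilinear
`H`-polynomials; it is isomorphic to `P_n^H/(P_n^H ∩ Id^H(A))`, so an element of
`P_n^H` is an `H`-identity of `A` iff the corresponding function here is `0`. -/
noncomputable def monomialSpan (F : Type*) {A H : Type*} [Field F] [NonUnitalRing A]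
    [Module F A] (ζ : H → Module.End F A) (n : ℕ) : Submodule F ((Fin n → A) → A) :=
  Submodule.span F {f | ∃ (σ : Equiv.Perm (Fin n)) (h : Fin n → H),
    f = fun a => evalWord (List.ofFn fun i => ζ (h i) (a (σ i)))}

/-- The action of a permutation on `n`-linear functions, permuting the variables. -/
noncomputable def permAct {A : Type*} {n : ℕ} (σ : Equiv.Perm (Fin n))
    (f : (Fin n → A) → A) : (Fin n → A) → A :=
  fun a => f fun i => a (σ i)


/-!
Already the column antisymmetrizer `b_T` annihilates every multilinear `H`-polynomial `g`.
Such a `g` is `F`-multilinear, so it suffices to evaluate `b_T g` on tuples from a basis of `A`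
consisting of a basis of `I` and `d = dim A - dim I` further vectors. If two cells of a column
carry the same basis vector, the terms of `b_T g` cancel in pairs `σ`, `(i j) σ`. Otherwise each
column carries at most `d` vectors outside `I`; as the columns are down-closed, the cells of the
first `d` rows of that column can host them, so at least `Σ_{i ≥ d} λ_i ≥ p` arguments lie in `I`.
Every monomial then has `p` letters in the `H`-invariant ideal `I`, and regrouping the word
around them turns its value into a product of `p` elements of `I`, which is `0`.
-/

open Equiv Finset

section EvalWord

variable {A : Type*} [NonUnitalRing A]

theorem evalWord_append_singleton {L : List A} (hL : L ≠ []) (y : A) :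
    evalWord (L ++ [y]) = evalWord L * y := by
  obtain ⟨x, l, rfl⟩ := List.exists_cons_of_ne_nil hL
  induction l generalizing x with
  | nil => simp [evalWord]
  | cons z l ih => simpa [evalWord] using ih (x * z) (List.cons_ne_nil _ _)

theorem evalWord_append_singleton_mul (L : List A) (x y : A) :
    evalWord (L ++ [x]) * y = evalWord (L ++ [x * y]) := by
  rcases eq_or_ne L [] with rfl | hL
  · simp [evalWord]
  · rw [evalWord_append_singleton hL, evalWord_append_singleton hL, mul_assoc]

theorem List.ofFn_snoc {α : Type*} {m : ℕ} (w : Fin m → α) (y : α) :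
    List.ofFn (Fin.snoc w y : Fin (m + 1) → α) = List.ofFn w ++ [y] := by
  rw [List.ofFn_succ']
  simp

variable {I : Set A} (hI : ∀ a, ∀ x ∈ I, a * x ∈ I ∧ x * a ∈ I)
include hI

/-- Each letter outside `I` is absorbed into the nearest letter of `I` to its left (the letters
before the first one of `I`, into that one). -/
theorem exists_evalWord_eq_of_lt_countP (L : List A) {k : ℕ}
    (hk : k < L.countP (· ∈ I)) :
    ∃ w : Fin (k + 1) → A, (∀ i, w i ∈ I) ∧ evalWord L = evalWord (List.ofFn w) := by
  induction L using List.reverseRecOn generalizing k with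
  | nil => simp at hk
  | append_singleton L y ih =>
    have hL : 0 < L.countP (· ∈ I) → L ≠ [] := by
      rintro h rfl
      simp at h
    by_cases hy : y ∈ I
    · simp only [List.countP_append, List.countP_singleton, hy, decide_true, if_true] at hk
      cases k with
      | zero =>
        refine ⟨fun _ => evalWord (L ++ [y]), fun _ => ?_, by simp [evalWord]⟩
        rcases eq_or_ne L [] with rfl | hL'
        · simpa [evalWord] using hy
        · rw [evalWord_append_singleton hL']
          exact (hI _ _ hy).1
      | succ k =>
        obtain ⟨w, hwI, hw⟩ := ih (k := k) (by omega)
        refine ⟨Fin.snoc w y, Fin.lastCases (by simpa using hy) (by simpa using hwI), ?_⟩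
        rw [evalWord_append_singleton (hL (by omega)), hw, List.ofFn_snoc,
          evalWord_append_singleton (by simp)]
    · simp only [List.countP_append, List.countP_singleton, hy, decide_false,
        Bool.false_eq_true, ↓reduceIte, add_zero] at hk
      obtain ⟨w, hwI, hw⟩ := ih hk
      have hlast : w (Fin.last k) * y ∈ I := (hI _ _ (hwI _)).2
      refine ⟨Fin.snoc (Fin.init w) (w (Fin.last k) * y),
        Fin.lastCases (by simpa using hlast) fun i => by simpa [Fin.init] using hwI i.castSucc, ?_⟩
      rw [evalWord_append_singleton (hL (by omega)), hw, ← Fin.snoc_init_self w, List.ofFn_snoc,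
        evalWord_append_singleton_mul, List.ofFn_snoc]
      simp

theorem evalWord_ofFn_eq_zero_of_le_card {p : ℕ} (hp : 0 < p)
    (hIp : ∀ x : Fin p → A, (∀ i, x i ∈ I) → evalWord (List.ofFn x) = 0)
    {m : ℕ} (w : Fin m → A) (hw : p ≤ #{i | w i ∈ I}) : evalWord (List.ofFn w) = 0 := by
  obtain ⟨k, rfl⟩ := Nat.exists_eq_add_one_of_ne_zero hp.ne'
  have hcount : (List.ofFn w).countP (· ∈ I) = #{i | w i ∈ I} := by
    rw [List.ofFn_eq_map, ← Multiset.coe_countP, ← Multiset.map_coe, Multiset.countP_map]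
    rfl
  obtain ⟨u, huI, hu⟩ := exists_evalWord_eq_of_lt_countP hI (List.ofFn w) (k := k) (by omega)
  rw [hu, hIp u huI]

end EvalWord

section Multilinear

variable (F : Type*) {A : Type*} [Field F] [NonUnitalRing A] [Module F A]

theorem evalWord_eq_snd_prod [IsScalarTower F A A] [SMulCommClass F A A] :
    ∀ L : List A, evalWord L = (L.map ((↑) : A → Unitization F A)).prod.snd
  | [] => by simp [evalWord]
  | [x] => by simp [evalWord]
  | x :: y :: l => by
    rw [evalWord, evalWord_eq_snd_prod (x * y :: l)]
    simp [mul_assoc]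
termination_by L => L.length

/-- The product in the unitization, read off in `A`; for `n = 0` this is `(1 : Unitization F A).snd
= 0 = evalWord []`. -/
noncomputable def evalWordMultilinear [IsScalarTower F A A] [SMulCommClass F A A] (n : ℕ) :
    MultilinearMap F (fun _ : Fin n => A) A :=
  (Unitization.sndHom F F A).compMultilinearMap <|
    (MultilinearMap.mkPiAlgebraFin F n (Unitization F A)).compLinearMap
      fun _ => Unitization.inrHom F F A

theorem evalWordMultilinear_apply [IsScalarTower F A A] [SMulCommClass F A A] {n : ℕ}
    (v : Fin n → A) : evalWordMultilinear F n v = evalWord (List.ofFn v) := by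
  simp [evalWordMultilinear, evalWord_eq_snd_prod F, List.map_ofFn, Function.comp_def]

variable {F} {H : Type*} (ζ : H → Module.End F A) {n : ℕ}

theorem exists_multilinearMap_of_mem_monomialSpan [IsScalarTower F A A] [SMulCommClass F A A]
    {g : (Fin n → A) → A} (hg : g ∈ monomialSpan F ζ n) :
    ∃ M : MultilinearMap F (fun _ : Fin n => A) A, ⇑M = g := by
  induction hg using Submodule.span_induction with
  | mem g hg =>
    obtain ⟨σ, h, rfl⟩ := hg
    exact ⟨((evalWordMultilinear F n).compLinearMap fun i => ζ (h i)).domDomCongr σ,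
      funext fun a => by simp [evalWordMultilinear_apply]⟩
  | zero => exact ⟨0, rfl⟩
  | add _ _ _ _ h₁ h₂ =>
    obtain ⟨M₁, rfl⟩ := h₁
    obtain ⟨M₂, rfl⟩ := h₂
    exact ⟨M₁ + M₂, rfl⟩
  | smul c _ _ h =>
    obtain ⟨M, rfl⟩ := h
    exact ⟨c • M, rfl⟩

theorem permAct_mem_monomialSpan (σ : Perm (Fin n)) {g : (Fin n → A) → A}
    (hg : g ∈ monomialSpan F ζ n) : permAct σ g ∈ monomialSpan F ζ n := by
  have : monomialSpan F ζ n ≤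
      (monomialSpan F ζ n).comap (LinearMap.funLeft F A fun a i => a (σ i)) := by
    refine Submodule.span_le.mpr ?_
    rintro _ ⟨τ, h, rfl⟩
    exact Submodule.subset_span ⟨τ.trans σ, h, rfl⟩
  exact this hg

theorem apply_eq_zero_of_mem_monomialSpan_of_le_card {I : Submodule F A}
    (hI : ∀ a : A, ∀ x ∈ I, a * x ∈ I ∧ x * a ∈ I) (hIinv : ∀ h : H, ∀ x ∈ I, ζ h x ∈ I)
    {p : ℕ} (hp : 0 < p) (hIp : ∀ x : Fin p → A, (∀ i, x i ∈ I) → evalWord (List.ofFn x) = 0)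
    {g : (Fin n → A) → A} (hg : g ∈ monomialSpan F ζ n) {a : Fin n → A}
    (ha : p ≤ #{k | a k ∈ I}) : g a = 0 := by
  suffices monomialSpan F ζ n ≤ LinearMap.ker (LinearMap.proj a) from this hg
  refine Submodule.span_le.mpr ?_
  rintro _ ⟨σ, h, rfl⟩
  refine evalWord_ofFn_eq_zero_of_le_card (I := I) hI hp hIp _ (ha.trans ?_)
  refine card_le_card_of_injOn σ.symm (fun k hk => ?_) σ.symm.injective.injOn
  simp only [coe_filter, mem_univ, true_and, Set.mem_ofPred_eq, apply_symm_apply] at hk ⊢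
  exact hIinv _ _ hk

end Multilinear

theorem sum_sign_smul_permAct_apply_eq_zero {R M : Type*} [Ring R] [AddCommGroup M] [Module R M]
    {n : ℕ} {S : Finset (Perm (Fin n))} {i j : Fin n} (hij : i ≠ j)
    (hS : ∀ σ ∈ S, swap i j * σ ∈ S) (g : (Fin n → M) → M) {a : Fin n → M} (ha : a i = a j) :
    (∑ σ ∈ S, ((Perm.sign σ : ℤ) : R) • permAct σ g) a = 0 := by
  have hswap : ∀ σ : Perm (Fin n), (fun k => a ((swap i j * σ) k)) = fun k => a (σ k) := by
    intro σ
    funext k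
    simp only [Perm.mul_apply, swap_apply_def]
    split_ifs <;> simp_all
  rw [Finset.sum_apply]
  refine sum_involution (fun σ _ => swap i j * σ) (fun σ _ => ?_) (fun σ _ _ => ?_) hS
    (fun σ _ => swap_mul_self_mul i j σ)
  · simp only [Pi.smul_apply, permAct, hswap, Perm.sign_mul, Perm.sign_swap hij]
    simp
  · simpa [swap_eq_one_iff] using hij

section YoungDiagram

variable {s : ℕ} (l : Fin s → ℕ)

def youngCellsEquivSigma : {c : Fin s × ℕ // c.2 < l c.1} ≃ Σ i, Fin (l i) where
  toFun c := ⟨c.1.1, c.1.2, c.2⟩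
  invFun x := ⟨(x.1, x.2), x.2.2⟩
  left_inv _ := rfl
  right_inv _ := rfl

-- Only a local instance: a global one would change the decidability instances elaborated in later
-- statements quantifying over cells, such as `columnStabilizer` and the final theorem.
abbrev youngCellsFintype : Fintype {c : Fin s × ℕ // c.2 < l c.1} :=
  Fintype.ofEquiv _ (youngCellsEquivSigma l).symm

attribute [local instance] youngCellsFintype

theorem card_youngCells_filter_row (Q : Fin s → Prop) [DecidablePred Q] :
    #{c : {c : Fin s × ℕ // c.2 < l c.1} | Q c.1.1} = ∑ i with Q i, l i := by
  rw [card_equiv (youngCellsEquivSigma l) (t := (univ.filter Q).sigma fun _ => univ)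
    (by simp [youngCellsEquivSigma]), card_sigma]
  simp

variable {l}

theorem card_filter_column_le_card_rows_lt (hl : Antitone l) {d j : ℕ}
    (bad : {c : Fin s × ℕ // c.2 < l c.1} → Prop) [DecidablePred bad]
    (hbad : #{c | bad c ∧ c.1.2 = j} ≤ d) :
    #{c | bad c ∧ c.1.2 = j} ≤ #{c : {c : Fin s × ℕ // c.2 < l c.1} | c.1.1 < d ∧ c.1.2 = j} := by
  by_cases hlow : ∃ c : {c : Fin s × ℕ // c.2 < l c.1}, d ≤ c.1.1 ∧ c.1.2 = j
  · obtain ⟨c, hdc, rfl⟩ := hlow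
    -- a cell of column `j` at row `c.1.1 ≥ d` forces the cells of column `j` in all rows `< d`
    refine hbad.trans ?_
    have hds : d < s := hdc.trans_lt c.1.1.isLt
    have hcell : ∀ r : Fin d, c.1.2 < l ⟨r, r.isLt.trans hds⟩ :=
      fun r => c.2.trans_le (hl (Fin.le_def.mpr (r.isLt.le.trans hdc)))
    calc d = #(univ : Finset (Fin d)) := by simp
      _ ≤ _ := card_le_card_of_injOn (fun r => ⟨(⟨r, r.isLt.trans hds⟩, c.1.2), hcell r⟩)
          (fun r _ => by simp) (fun r _ r' _ h => by simpa [Fin.ext_iff] using h)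
  · refine card_le_card fun c hc => ?_
    simp only [mem_filter, mem_univ, true_and] at hc ⊢
    exact ⟨not_le.mp fun hdc => hlow ⟨c, hdc, hc.2⟩, hc.2⟩

theorem card_filter_le_card_rows_lt (hl : Antitone l) {d : ℕ}
    (bad : {c : Fin s × ℕ // c.2 < l c.1} → Prop) [DecidablePred bad]
    (hbad : ∀ j, #{c | bad c ∧ c.1.2 = j} ≤ d) :
    #{c | bad c} ≤ #{c : {c : Fin s × ℕ // c.2 < l c.1} | c.1.1 < d} := by
  have hmaps : ∀ t : Finset {c : Fin s × ℕ // c.2 < l c.1}, ∀ c ∈ t,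
      c.1.2 ∈ univ.image fun c : {c : Fin s × ℕ // c.2 < l c.1} => c.1.2 :=
    fun _ c _ => mem_image_of_mem _ (mem_univ c)
  rw [card_eq_sum_card_fiberwise (hmaps _), card_eq_sum_card_fiberwise (hmaps _)]
  refine sum_le_sum fun j _ => ?_
  simp only [filter_filter]
  exact card_filter_column_le_card_rows_lt hl bad (hbad j)

theorem sum_rows_ge_le_card_isLeft {α : Type*} (hl : Antitone l) {d : ℕ}
    (w : {c : Fin s × ℕ // c.2 < l c.1} → α ⊕ Fin d)
    (hw : ∀ c₁ c₂, c₁.1.2 = c₂.1.2 → w c₁ = w c₂ → c₁ = c₂) :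
    ∑ i ∈ univ.filter (fun i : Fin s => d ≤ (i : ℕ)), l i ≤ #{c | (w c).isLeft} := by
  have hcol : ∀ j, #{c | ¬ (w c).isLeft ∧ c.1.2 = j} ≤ d := by
    intro j
    calc #{c | ¬ (w c).isLeft ∧ c.1.2 = j}
        ≤ #(univ.map Function.Embedding.inr : Finset (α ⊕ Fin d)) := by
          refine card_le_card_of_injOn w (fun c hc => ?_) fun c₁ hc₁ c₂ hc₂ h => ?_
          · simp only [coe_filter, mem_univ, true_and, Set.mem_ofPred_eq, Sum.not_isLeft,
              Sum.isRight_iff] at hc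
            obtain ⟨m, hm⟩ := hc.1
            simp [hm]
          · simp only [coe_filter, mem_univ, true_and, Set.mem_ofPred_eq] at hc₁ hc₂
            exact hw c₁ c₂ (hc₁.2.trans hc₂.2.symm) h
      _ = d := by simp
  have hbad := card_filter_le_card_rows_lt hl (fun c => ¬ (w c).isLeft) hcol
  have hsplit := card_filter_add_card_filter_not (s := univ) (fun c => (w c).isLeft)
  have hrows := card_filter_add_card_filter_not (s := univ)
    (fun c : {c : Fin s × ℕ // c.2 < l c.1} => d ≤ c.1.1)
  rw [card_youngCells_filter_row l fun i => d ≤ (i : ℕ)] at hrows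
  simp only [not_le] at hrows
  omega

end YoungDiagram

section ColumnStabilizer

variable {s n : ℕ} {l : Fin s → ℕ}

noncomputable def columnStabilizer (T : {c : Fin s × ℕ // c.2 < l c.1} ≃ Fin n) :
    Finset (Perm (Fin n)) :=
  {σ | ∀ c, (T.symm (σ (T c))).val.2 = c.val.2}

theorem swap_mul_mem_columnStabilizer (T : {c : Fin s × ℕ // c.2 < l c.1} ≃ Fin n)
    {c₁ c₂ : {c : Fin s × ℕ // c.2 < l c.1}} (h : c₁.1.2 = c₂.1.2) {σ : Perm (Fin n)}
    (hσ : σ ∈ columnStabilizer T) : swap (T c₁) (T c₂) * σ ∈ columnStabilizer T := by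
  simp only [columnStabilizer, mem_filter, mem_univ, true_and] at hσ ⊢
  intro c
  rw [Perm.mul_apply, swap_apply_def]
  split_ifs with h₁ h₂
  · simp [← hσ c, h₁, h]
  · simp [← hσ c, h₂, h]
  · exact hσ c

end ColumnStabilizer

theorem Submodule.exists_basis_inl_mem {F A : Type*} [Field F] [AddCommGroup A] [Module F A]
    [FiniteDimensional F A] (I : Submodule F A) :
    ∃ b : Module.Basis (Fin (Module.finrank F I) ⊕ Fin (Module.finrank F A - Module.finrank F I))
      F A, ∀ i, b (.inl i) ∈ I := by
  obtain ⟨J, hJ⟩ := I.exists_isCompl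
  have hdim : Module.finrank F J = Module.finrank F A - Module.finrank F I := by
    have := Submodule.finrank_add_eq_of_isCompl hJ
    omega
  refine ⟨(((Module.finBasis F I).prod (Module.finBasis F J)).map
    (I.prodEquivOfIsCompl J hJ)).reindex (Equiv.sumCongr (.refl _) (finCongr hdim)), fun i => ?_⟩
  simp [Submodule.coe_prodEquivOfIsCompl']

section ColumnAntisymmetrizer

attribute [local instance] youngCellsFintype

theorem sum_columnStabilizer_sign_smul_permAct_eq_zero {F A H : Type*} [Field F]
    [NonUnitalRing A] [Module F A] [IsScalarTower F A A] [SMulCommClass F A A]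
    [FiniteDimensional F A] (ζ : H → Module.End F A) {I : Submodule F A}
    (hI : ∀ a : A, ∀ x ∈ I, a * x ∈ I ∧ x * a ∈ I) (hIinv : ∀ h : H, ∀ x ∈ I, ζ h x ∈ I)
    {p : ℕ} (hp : 0 < p) (hIp : ∀ x : Fin p → A, (∀ i, x i ∈ I) → evalWord (List.ofFn x) = 0)
    {s n : ℕ} {l : Fin s → ℕ} (hl : Antitone l)
    (htail : p ≤ ∑ i ∈ univ.filter
      (fun i : Fin s => Module.finrank F A - Module.finrank F I ≤ (i : ℕ)), l i)
    (T : {c : Fin s × ℕ // c.2 < l c.1} ≃ Fin n) {g : (Fin n → A) → A}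
    (hg : g ∈ monomialSpan F ζ n) :
    ∑ σ ∈ columnStabilizer T, ((Perm.sign σ : ℤ) : F) • permAct σ g = 0 := by
  set E := ∑ σ ∈ columnStabilizer T, ((Perm.sign σ : ℤ) : F) • permAct σ g
  have hE : E ∈ monomialSpan F ζ n :=
    sum_mem fun σ _ => Submodule.smul_mem _ _ (permAct_mem_monomialSpan ζ σ hg)
  obtain ⟨M, hM⟩ := exists_multilinearMap_of_mem_monomialSpan ζ hE
  obtain ⟨b, hb⟩ := I.exists_basis_inl_mem
  suffices M = 0 by rw [← hM, this]; rfl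
  refine Module.Basis.ext_multilinear (fun _ => b) fun v => ?_
  rw [hM, zero_apply]
  by_cases hrep : ∃ c₁ c₂, c₁.1.2 = c₂.1.2 ∧ v (T c₁) = v (T c₂) ∧ c₁ ≠ c₂
  · obtain ⟨c₁, c₂, hcol, hv, hne⟩ := hrep
    exact sum_sign_smul_permAct_apply_eq_zero (T.injective.ne hne)
      (fun _ => swap_mul_mem_columnStabilizer T hcol) g (by simp [hv])
  · simp only [not_exists, not_and, not_not] at hrep
    refine apply_eq_zero_of_mem_monomialSpan_of_le_card ζ hI hIinv hp hIp hE (htail.trans ?_)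
    calc _ ≤ #{c | (v (T c)).isLeft} := sum_rows_ge_le_card_isLeft hl _ hrep
      _ = #{k | (v k).isLeft} := card_equiv T (by simp)
      _ ≤ #{k | b (v k) ∈ I} := card_le_card fun k hk => by
          obtain ⟨i, hi⟩ := Sum.isLeft_iff.mp (mem_filter.mp hk).2
          simpa [hi] using hb i

end ColumnAntisymmetrizer

theorem youngSymmetrized_is_identity_general
    (F : Type*) [Field F]
    (A : Type*) [NonUnitalRing A] [Module F A] [IsScalarTower F A A] [SMulCommClass F A A]
    [FiniteDimensional F A]
    (H : Type*) [Ring H] [Algebra F H]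
    -- the generalized `H`-action on `A`
    (ζ : H →ₐ[F] Module.End F A)
    -- `I` is an `H`-invariant ideal with `Iᵖ = 0`
    (I : Submodule F A)
    (hIideal : ∀ a : A, ∀ x ∈ I, a * x ∈ I ∧ x * a ∈ I)
    (hIinv : ∀ h : H, ∀ x ∈ I, ζ h x ∈ I)
    (p : ℕ) (hp : 0 < p)
    (hIp : ∀ x : Fin p → A, (∀ i, x i ∈ I) → evalWord (List.ofFn x) = 0)
    -- `λ = (λ₁, …, λ_s)` is a partition of `n` with `Σ_{k > dim A − dim I} λ_k ≥ p`
    (n s : ℕ) (l : Fin s → ℕ) (hl : Antitone l)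
    (htail : p ≤ ∑ i ∈ Finset.univ.filter
      (fun i : Fin s => Module.finrank F A - Module.finrank F I ≤ (i : ℕ)), l i)
    -- `T` is a Young tableau of shape `λ`: a bijective filling of the diagram by `1, …, n`
    (T : {c : Fin s × ℕ // c.2 < l c.1} ≃ Fin n)
    -- `f` is a multilinear `H`-polynomial (represented as an `n`-linear function)
    (f : (Fin n → A) → A) (hf : f ∈ monomialSpan F (fun h : H => ζ h) n) :
    -- `e*_{T_λ} f = b_{T_λ} a_{T_λ} f` is an `H`-identity of `A`, i.e. the zero function
    (∑ σ ∈ Finset.univ.filter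
        (fun σ : Equiv.Perm (Fin n) => ∀ c, (T.symm (σ (T c))).val.2 = c.val.2),
      (((Equiv.Perm.sign σ : ℤ) : F) •
        permAct σ (∑ π ∈ Finset.univ.filter
          (fun π : Equiv.Perm (Fin n) => ∀ c, (T.symm (π (T c))).val.1 = c.val.1),
          permAct π f))) = 0 :=
  sum_columnStabilizer_sign_smul_permAct_eq_zero (fun h : H => ζ h) hIideal hIinv hp hIp hl htail T
    (sum_mem fun π _ => permAct_mem_monomialSpan _ π hf)

/-- Let `A` be a finite dimensional associative algebra with a generalized
`H`-action over a field `F` of characteristic `0`, and `I ⊆ A` an `H`-invariant ideal with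
`Iᵖ = 0`.  Let `λ = (λ₁, …, λ_s) ⊢ n` be a partition with `Σ_{k > dim A − dim I} λ_k ≥ p`.
Then for every Young tableau `T_λ` of shape `λ` and every multilinear `H`-polynomial
`f ∈ P_n^H`, the element `e*_{T_λ} f = b_{T_λ} a_{T_λ} f` is a polynomial `H`-identity of
`A` (here expressed in the space of representable `n`-linear functions, where being an
identity means being the zero function); consequently the multiplicity `m(A, H, λ)` of
`χ(λ)` in the `n`-th cocharacter of `A` is zero. -/
theorem youngSymmetrized_is_identity
    (F : Type*) [Field F] [CharZero F]
    (A : Type*) [NonUnitalRing A] [Module F A] [IsScalarTower F A A] [SMulCommClass F A A]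
    [FiniteDimensional F A]
    (H : Type*) [Ring H] [Algebra F H]
    -- the generalized `H`-action on `A`
    (ζ : H →ₐ[F] Module.End F A)
    (hGA : ∀ h : H, ∃ (k : ℕ) (h' h'' h''' h'''' : Fin k → H), ∀ a b : A,
      ζ h (a * b) = ∑ i, (ζ (h' i) a * ζ (h'' i) b + ζ (h''' i) b * ζ (h'''' i) a))
    -- `I` is an `H`-invariant ideal with `Iᵖ = 0`
    (I : Submodule F A)
    (hIideal : ∀ a : A, ∀ x ∈ I, a * x ∈ I ∧ x * a ∈ I)
    (hIinv : ∀ h : H, ∀ x ∈ I, ζ h x ∈ I)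
    (p : ℕ) (hp : 0 < p)
    (hIp : ∀ x : Fin p → A, (∀ i, x i ∈ I) → evalWord (List.ofFn x) = 0)
    -- `λ = (λ₁, …, λ_s)` is a partition of `n` with `Σ_{k > dim A − dim I} λ_k ≥ p`
    (n s : ℕ) (l : Fin s → ℕ) (hl : Antitone l) (hlpos : ∀ i, 0 < l i)
    (hln : ∑ i, l i = n)
    (htail : p ≤ ∑ i ∈ Finset.univ.filter
      (fun i : Fin s => Module.finrank F A - Module.finrank F I ≤ (i : ℕ)), l i)
    -- `T` is a Young tableau of shape `λ`: a bijective filling of the diagram by `1, …, n`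
    (T : {c : Fin s × ℕ // c.2 < l c.1} ≃ Fin n)
    -- `f` is a multilinear `H`-polynomial (represented as an `n`-linear function)
    (f : (Fin n → A) → A) (hf : f ∈ monomialSpan F (fun h : H => ζ h) n) :
    -- `e*_{T_λ} f = b_{T_λ} a_{T_λ} f` is an `H`-identity of `A`, i.e. the zero function
    (∑ σ ∈ Finset.univ.filter
        (fun σ : Equiv.Perm (Fin n) => ∀ c, (T.symm (σ (T c))).val.2 = c.val.2),
      (((Equiv.Perm.sign σ : ℤ) : F) •
        permAct σ (∑ π ∈ Finset.univ.filter
          (fun π : Equiv.Perm (Fin n) => ∀ c, (T.symm (π (T c))).val.1 = c.val.1),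
          permAct π f))) = 0 :=
  youngSymmetrized_is_identity_general F A H ζ I hIideal hIinv p hp hIp n s l hl htail T f hf
end
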